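/- arXiv:1611.08244 — 3 statements merged into one kernel-verified Lean document; each statement's English description precedes it below -/
import Mathlib

section
/- Let m ≥ 6 be a multiple of 3. If m − 1 has a witness, then m/3 + R(m/3) = R(m) + 1; if m − 1 has no witness, then m/3 + R(m/3) = R(m) + 2. -/
/-- The auxiliary sequence: `a 1 = 3`, `a i = 3 * a (i-1) - 1` for `i ≥ 2`. -/
def a : ℕ → ℕ
  | 0 => 0
  | 1 => 3
  | n + 2 => 3 * a (n + 1) - 1

/-- `R(m, i) = max(0, ⌊(m − a i − 1)/3^i⌋)` (truncated ℕ-subtraction gives the max). -/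
def Rmi (m i : ℕ) : ℕ := (m - a i - 1) / 3 ^ i

/-- `R(m) = ∑_{i=1}^∞ R(m, i)`; all terms with `i > m` vanish, so a finite sum suffices. -/
def R (m : ℕ) : ℕ := ∑ i ∈ Finset.Icc 1 m, Rmi m i

/-- `m` has a witness pair `(k, i)` of positive integers with `m = k·3^i + a i`. -/
def HasWitness (m : ℕ) : Prop := ∃ k i : ℕ, 1 ≤ k ∧ 1 ≤ i ∧ m = k * 3 ^ i + a i

/-- `B` is the `B`-sequence: `B 0 = 0`, `B n = n` for `1 ≤ n ≤ 5`, and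
`B n = B (n - B (n-1)) + B (n - B (n-2)) + B (n - B (n-3))` for `n ≥ 6`. -/
def IsBSeq (B : ℕ → ℕ) : Prop :=
  B 0 = 0 ∧ (∀ n, 1 ≤ n → n ≤ 5 → B n = n) ∧
    ∀ n, 6 ≤ n → B n = B (n - B (n - 1)) + B (n - B (n - 2)) + B (n - B (n - 3))

/-!
Write `m = 3n`. Since `a (i + 1) = 3 a i - 1`, we get `R(3n, i + 1) = ⌊(n - a i) / 3^i⌋`, which
exceeds `R(n, i) = ⌊(n - a i - 1) / 3^i⌋` by one exactly when `i` is a witness for `n`, while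
`R(3n, 1) = n - 2`. A witness pair `(k, i + 1)` of `n` gives `2n - 1 = 3^i (6k + 5)`, so `i` is the
3-adic valuation of `2n - 1` and `n` has at most one witness. Hence
`R(3n) = n - 2 + R(n) + [n has a witness]`. Finally `3n - 1 = k 3^(i+1) + a (i+1)` iff
`n = k 3^i + a i`, while `3n - 1 = 3k + a 1` is impossible modulo 3, so `m - 1` has a witness iff `m / 3` does.
-/

open Finset

lemma two_mul_a_add_one (i : ℕ) : 2 * a (i + 1) = 5 * 3 ^ i + 1 := by
  induction i with
  | zero => rfl
  | succ i ih =>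
    have hrec : a (i + 2) = 3 * a (i + 1) - 1 := rfl
    rw [hrec, pow_succ]
    omega

lemma a_add_one_of_pos {i : ℕ} (hi : 1 ≤ i) : a (i + 1) = 3 * a i - 1 := by
  obtain ⟨i, rfl⟩ := Nat.exists_eq_add_of_le' hi
  rfl

lemma one_le_a {i : ℕ} (hi : 1 ≤ i) : 1 ≤ a i := by
  obtain ⟨i, rfl⟩ := Nat.exists_eq_add_of_le' hi
  have := two_mul_a_add_one i
  have := Nat.one_le_pow i 3 (by norm_num)
  omega

def IsWitness (n i : ℕ) : Prop := ∃ k, 1 ≤ k ∧ 1 ≤ i ∧ n = k * 3 ^ i + a i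

lemma IsWitness.one_le {n i : ℕ} (h : IsWitness n i) : 1 ≤ i := by
  obtain ⟨k, -, hi, -⟩ := h
  exact hi

lemma hasWitness_iff_exists_isWitness {n : ℕ} : HasWitness n ↔ ∃ i, IsWitness n i :=
  exists_comm

lemma isWitness_iff_dvd {n i : ℕ} (hi : 1 ≤ i) :
    IsWitness n i ↔ a i < n ∧ 3 ^ i ∣ n - a i := by
  constructor
  · rintro ⟨k, hk, -, rfl⟩
    have := Nat.le_mul_of_pos_left (3 ^ i) hk
    have := Nat.one_le_pow i 3 (by norm_num)
    exact ⟨by omega, by simp⟩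
  · rintro ⟨hlt, k, hk⟩
    refine ⟨k, Nat.pos_of_ne_zero ?_, hi, by rw [mul_comm]; omega⟩
    rintro rfl
    omega

lemma two_mul_sub_one_eq_pow_mul {n i k : ℕ} (h : n = k * 3 ^ (i + 1) + a (i + 1)) :
    2 * n - 1 = 3 ^ i * (6 * k + 5) := by
  have : 2 * n = 3 ^ i * (6 * k + 5) + 1 := by
    rw [h, mul_add, two_mul_a_add_one, pow_succ]
    ring
  omega

lemma IsWitness.pow_dvd {n i : ℕ} (h : IsWitness n (i + 1)) : 3 ^ i ∣ 2 * n - 1 := by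
  obtain ⟨k, -, -, hn⟩ := h
  rw [two_mul_sub_one_eq_pow_mul hn]
  exact dvd_mul_right _ _

lemma IsWitness.not_pow_succ_dvd {n i : ℕ} (h : IsWitness n (i + 1)) :
    ¬ 3 ^ (i + 1) ∣ 2 * n - 1 := by
  obtain ⟨k, -, -, hn⟩ := h
  rw [two_mul_sub_one_eq_pow_mul hn, pow_succ,
    Nat.mul_dvd_mul_iff_left (Nat.pow_pos (by norm_num))]
  omega

lemma IsWitness.unique {n i j : ℕ} (hi : IsWitness n i) (hj : IsWitness n j) : i = j := by
  obtain ⟨i, rfl⟩ := Nat.exists_eq_add_of_le' hi.one_le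
  obtain ⟨j, rfl⟩ := Nat.exists_eq_add_of_le' hj.one_le
  by_contra hne
  rcases Nat.lt_or_gt_of_ne hne with h | h
  · exact hi.not_pow_succ_dvd ((Nat.pow_dvd_pow 3 (by omega)).trans hj.pow_dvd)
  · exact hj.not_pow_succ_dvd ((Nat.pow_dvd_pow 3 (by omega)).trans hi.pow_dvd)

lemma IsWitness.le {n i : ℕ} (h : IsWitness n i) : i ≤ n := by
  obtain ⟨k, hk, -, rfl⟩ := h
  have := Nat.le_mul_of_pos_left (3 ^ i) hk
  have : i < 3 ^ i := Nat.lt_pow_self (by norm_num)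
  omega

open Classical in
lemma card_filter_isWitness {n N : ℕ} (hN : n ≤ N) :
    #{i ∈ Icc 1 N | IsWitness n i} = if HasWitness n then 1 else 0 := by
  split_ifs with h
  · obtain ⟨i, hi⟩ := hasWitness_iff_exists_isWitness.1 h
    refine card_eq_one.2 ⟨i, eq_singleton_iff_unique_mem.2 ⟨?_, fun j hj => ?_⟩⟩
    · exact mem_filter.2 ⟨mem_Icc.2 ⟨hi.one_le, hi.le.trans hN⟩, hi⟩
    · exact (mem_filter.1 hj).2.unique hi
  · refine card_eq_zero.2 (filter_eq_empty_iff.2 fun i _ hi => h ?_)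
    exact hasWitness_iff_exists_isWitness.2 ⟨i, hi⟩

lemma three_mul_sub_one_eq {k i : ℕ} (hi : 1 ≤ i) :
    3 * (k * 3 ^ i + a i) - 1 = k * 3 ^ (i + 1) + a (i + 1) := by
  rw [a_add_one_of_pos hi, pow_succ]
  have := one_le_a hi
  have : k * (3 ^ i * 3) = 3 * (k * 3 ^ i) := by ring
  omega

lemma hasWitness_three_mul_sub_one {n : ℕ} : HasWitness (3 * n - 1) ↔ HasWitness n := by
  constructor
  · rintro ⟨k, i, hk, hi, hn⟩
    obtain ⟨i, rfl⟩ := Nat.exists_eq_add_of_le' hi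
    rcases i with _ | i
    · have : a 1 = 3 := rfl
      rw [zero_add, pow_one] at hn
      omega
    · rw [← three_mul_sub_one_eq (by omega)] at hn
      exact ⟨k, i + 1, hk, by omega, by omega⟩
  · rintro ⟨k, i, hk, hi, rfl⟩
    exact ⟨k, i + 1, hk, by omega, three_mul_sub_one_eq hi⟩

lemma Rmi_eq_zero_of_lt {m i : ℕ} (h : m < i) : Rmi m i = 0 :=
  Nat.div_eq_of_lt <| calc
    m - a i - 1 ≤ m := by omega
    _ < 3 ^ m := Nat.lt_pow_self (by norm_num)
    _ ≤ 3 ^ i := Nat.pow_le_pow_right (by norm_num) h.le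

lemma R_eq_sum_Icc {m N : ℕ} (h : m ≤ N) : R m = ∑ i ∈ Icc 1 N, Rmi m i :=
  sum_subset (Icc_subset_Icc_right h) fun i hi hi' => by
    simp only [mem_Icc, not_and, not_le] at hi hi'
    exact Rmi_eq_zero_of_lt (hi' hi.1)

lemma sum_Icc_one_add_one {M : Type*} [AddCommMonoid M] (f : ℕ → M) (N : ℕ) :
    ∑ i ∈ Icc 1 (N + 1), f i = f 1 + ∑ i ∈ Icc 1 N, f (i + 1) := by
  rw [← insert_Icc_add_one_left_eq_Icc (by omega), sum_insert (by simp),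
    ← map_add_right_Icc, sum_map]
  rfl

lemma Rmi_three_mul_one (n : ℕ) : Rmi (3 * n) 1 = n - 2 := by
  simp only [Rmi, pow_one]
  have : a 1 = 3 := rfl
  omega

open Classical in
lemma Rmi_three_mul_add_one {n i : ℕ} (hi : 1 ≤ i) :
    Rmi (3 * n) (i + 1) = Rmi n i + if IsWitness n i then 1 else 0 := by
  have hdiv : Rmi (3 * n) (i + 1) = (n - a i) / 3 ^ i := by
    have : 3 * n - a (i + 1) - 1 = 3 * (n - a i) := by
      have := a_add_one_of_pos hi
      have := one_le_a hi
      omega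
    rw [Rmi, this, pow_succ, mul_comm _ 3, Nat.mul_div_mul_left _ _ (by norm_num)]
  rw [hdiv, Rmi, isWitness_iff_dvd hi]
  by_cases hlt : a i < n
  · rw [show n - a i = n - a i - 1 + 1 by omega, Nat.succ_div]
    simp [hlt]
  · simp [hlt, Nat.sub_eq_zero_of_le (not_lt.1 hlt)]

open Classical in
lemma R_three_mul (n : ℕ) : R (3 * n) = n - 2 + R n + if HasWitness n then 1 else 0 := by
  rw [R_eq_sum_Icc (Nat.le_succ (3 * n)), sum_Icc_one_add_one, Rmi_three_mul_one,
    sum_congr rfl fun i hi => Rmi_three_mul_add_one (mem_Icc.1 hi).1, sum_add_distrib,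
    ← R_eq_sum_Icc (by omega), sum_boole, Nat.cast_id, card_filter_isWitness (by omega),
    add_assoc]

/-- for `m ≥ 6` a multiple of 3: if `m - 1` has a witness then
`m/3 + R(m/3) = R(m) + 1`; if not, then `m/3 + R(m/3) = R(m) + 2`. -/
theorem stmt_5 (m : ℕ) (hm : 6 ≤ m) (h3 : 3 ∣ m) :
    (HasWitness (m - 1) → m / 3 + R (m / 3) = R m + 1) ∧
    (¬HasWitness (m - 1) → m / 3 + R (m / 3) = R m + 2) := by
  obtain ⟨n, rfl⟩ := h3
  rw [Nat.mul_div_cancel_left n (by norm_num), R_three_mul, hasWitness_three_mul_sub_one]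
  constructor <;> intro h <;> simp only [h, if_true, if_false] <;> omega
end

section
/- No positive integer m with m ≡ 1 (mod 3) has a witness pair, and every multiple of 3 with m ≥ 6 has the witness pair (m/3 − 1, 1). Consequently, every positive integer m ≡ 1 (mod 3) appears exactly once in the B-sequence, and every multiple of 3 with m ≥ 6 appears exactly twice. -/
def Wt (m : ℕ) : ℕ := ∑ i ∈ Finset.Icc 1 m, if 3 ^ i ∣ (m - a i) ∧ a i < m then 1 else 0

lemma a_succ (i : ℕ) (h : 1 ≤ i) : a (i+1) = 3 * a i - 1 := by
  obtain ⟨j, rfl⟩ : ∃ j, i = j + 1 := ⟨i - 1, by omega⟩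
  rfl

lemma a_ge (i : ℕ) (h : 1 ≤ i) : i + 2 ≤ a i := by
  induction i with
  | zero => omega
  | succ n ih =>
    rcases Nat.eq_or_lt_of_le h with h'|h'
    · simp [← h']; rfl
    · have h1 : 1 ≤ n := by omega
      rw [a_succ n h1]; have := ih h1; omega

lemma a_mod3 (i : ℕ) (h : 2 ≤ i) : a i % 3 = 2 := by
  obtain ⟨j, rfl⟩ : ∃ j, i = j + 1 := ⟨i - 1, by omega⟩
  rw [a_succ j (by omega)]
  have := a_ge j (by omega); omega

lemma Rmi_succ (m i : ℕ) :
    Rmi (m+1) i = Rmi m i + (if 3 ^ i ∣ (m - a i) ∧ a i < m then 1 else 0) := by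
  unfold Rmi
  have h1 : m + 1 - a i - 1 = m - a i := by omega
  rw [h1]
  rcases lt_or_ge (a i) m with h | h
  · have h2 : m - a i = (m - a i - 1) + 1 := by omega
    rw [h2, Nat.succ_div, ← h2]
    congr 1
    simp [h]
  · have h2 : m - a i = 0 := by omega
    rw [if_neg (by omega), h2]
    simp

lemma R_succ (m : ℕ) : R (m+1) = R m + Wt m := by
  unfold R Wt
  rw [Finset.sum_Icc_succ_top (by omega : 1 ≤ m + 1)]
  have h0 : Rmi (m+1) (m+1) = 0 := by
    have := a_ge (m+1) (by omega)
    unfold Rmi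
    have : m + 1 - a (m+1) - 1 = 0 := by omega
    rw [this]; simp
  rw [h0, add_zero, ← Finset.sum_add_distrib]
  exact Finset.sum_congr rfl fun i _ => Rmi_succ m i

lemma W_mod1 (m : ℕ) (h : m % 3 = 1) : Wt m = 0 := by
  apply Finset.sum_eq_zero
  intro i hi
  rw [Finset.mem_Icc] at hi
  rw [if_neg]
  rintro ⟨hdvd, hlt⟩
  have h3 : (3:ℕ) ∣ 3 ^ i := dvd_pow_self 3 (by omega)
  obtain ⟨c, hc⟩ := dvd_trans h3 hdvd
  rcases Nat.lt_or_ge i 2 with h2 | h2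
  · have hi1 : i = 1 := by omega
    rw [hi1, show a 1 = 3 from rfl] at hc hlt
    omega
  · have hA := a_mod3 i h2
    omega

lemma W_mod0 (m : ℕ) (h : m % 3 = 0) (h6 : 6 ≤ m) : Wt m = 1 := by
  unfold Wt
  rw [Finset.sum_eq_single_of_mem 1 (by rw [Finset.mem_Icc]; omega)]
  · rw [if_pos]
    rw [show a 1 = 3 from rfl, pow_one]
    exact ⟨⟨m / 3 - 1, by omega⟩, by omega⟩
  · intro i hi hne
    rw [Finset.mem_Icc] at hi
    rw [if_neg]
    rintro ⟨hdvd, hlt⟩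
    have h3 : (3:ℕ) ∣ 3 ^ i := dvd_pow_self 3 (by omega)
    obtain ⟨c, hc⟩ := dvd_trans h3 hdvd
    have hA := a_mod3 i (by omega)
    omega

lemma W_mod2 (t : ℕ) : Wt (3*t+2) = Wt (t+1) := by
  have key : ∀ i, 1 ≤ i →
      (if 3 ^ (i+1) ∣ (3*t+2 - a (i+1)) ∧ a (i+1) < 3*t+2 then (1:ℕ) else 0)
        = (if 3 ^ i ∣ (t+1 - a i) ∧ a i < t+1 then 1 else 0) := by
    intro i hi
    have ha := a_succ i hi
    have ha2 := a_ge i hi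
    refine if_congr ?_ rfl rfl
    rcases le_or_gt (t+1) (a i) with h | h
    · constructor
      · rintro ⟨_, hlt⟩; omega
      · rintro ⟨_, hlt⟩; omega
    · have e : 3*t+2 - a (i+1) = 3 * ((t+1) - a i) := by omega
      rw [e, ha, pow_succ']
      constructor
      · rintro ⟨hd, _⟩
        exact ⟨(mul_dvd_mul_iff_left (by norm_num : (3:ℕ) ≠ 0)).mp hd, by omega⟩
      · rintro ⟨hd, hlt⟩
        exact ⟨mul_dvd_mul_left 3 hd, by omega⟩
  have pad : Wt (t+1) = ∑ i ∈ Finset.Icc 1 (3*t+1), if 3 ^ i ∣ (t+1 - a i) ∧ a i < t+1 then 1 else 0 := by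
    unfold Wt
    apply Finset.sum_subset
    · apply Finset.Icc_subset_Icc_right; omega
    · intro i hi hni
      rw [Finset.mem_Icc] at hi hni
      rw [if_neg]
      rintro ⟨_, hlt⟩
      have := a_ge i (by omega)
      omega
  rw [pad]
  unfold Wt
  have split1 : Finset.Icc 1 (3*t+2) = insert 1 (Finset.Icc 2 (3*t+2)) := by
    ext x
    simp only [Finset.mem_Icc, Finset.mem_insert]
    omega
  rw [split1, Finset.sum_insert (by simp)]
  have first : (if 3 ^ 1 ∣ (3*t+2 - a 1) ∧ a 1 < 3*t+2 then (1:ℕ) else 0) = 0 := by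
    rw [if_neg]
    rintro ⟨hd, hlt⟩
    obtain ⟨c, hc⟩ : (3:ℕ) ∣ (3*t+2 - a 1) := dvd_trans (by norm_num) hd
    rw [show a 1 = 3 from rfl] at hc hlt
    omega
  rw [first, zero_add]
  have e1 : Finset.Icc 2 (3*t+2) = Finset.Ico 2 (3*t+3) := by rw [← Finset.Ico_add_one_right_eq_Icc]; rfl
  have e2 : Finset.Icc 1 (3*t+1) = Finset.Ico 1 (3*t+2) := by rw [← Finset.Ico_add_one_right_eq_Icc]; rfl
  rw [e1, e2, Finset.sum_Ico_eq_sum_range, Finset.sum_Ico_eq_sum_range]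
  rw [show 3*t+3-2 = 3*t+1 by omega, show 3*t+2-1 = 3*t+1 by omega]
  apply Finset.sum_congr rfl
  intro i _
  have := key (1+i) (by omega)
  rw [show 1+i+1 = 2+i by omega] at this
  exact this

lemma Wt_le_one : ∀ m, Wt m ≤ 1 := by
  intro m
  induction m using Nat.strong_induction_on with
  | _ m ih =>
    rcases Nat.lt_or_ge m 6 with h6 | h6
    · interval_cases m <;> decide
    · rcases (show m % 3 = 0 ∨ m % 3 = 1 ∨ m % 3 = 2 by omega) with h|h|h
      · rw [W_mod0 m h h6]
      · rw [W_mod1 m h]; omega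
      · obtain ⟨t, rfl⟩ : ∃ t, m = 3*t+2 := ⟨m/3, by omega⟩
        rw [W_mod2 t]
        exact ih (t+1) (by omega)

def g (m : ℕ) : ℕ := m + R m


lemma g_succ (m : ℕ) : g (m+1) = g m + 1 + Wt m := by
  show (m+1) + R (m+1) = (m + R m) + 1 + Wt m
  rw [R_succ]; ring

lemma Rscale : ∀ t, 2 ≤ t → R (3*t) + 2 = t + R t + Wt t := by
  intro t ht
  induction t, ht using Nat.le_induction with
  | base => decide
  | succ t ht ih =>
    have e1 : R (3*t+1) = R (3*t) + Wt (3*t) := R_succ _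
    have e2 : R (3*t+2) = R (3*t+1) + Wt (3*t+1) := R_succ _
    have e3 : R (3*t+3) = R (3*t+2) + Wt (3*t+2) := R_succ (3*t+2)
    have e4 : R (t+1) = R t + Wt t := R_succ _
    have w0 : Wt (3*t) = 1 := W_mod0 _ (by omega) (by omega)
    have w1 : Wt (3*t+1) = 0 := W_mod1 _ (by omega)
    have w2 : Wt (3*t+2) = Wt (t+1) := W_mod2 t
    rw [show 3*(t+1) = 3*t+3 by ring]
    omega

lemma g_total : ∀ n, 1 ≤ n → ∃ m, 1 ≤ m ∧ g m ≤ n ∧ n < g (m+1) := by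
  intro n hn
  induction n, hn using Nat.le_induction with
  | base => exact ⟨1, by norm_num, by decide, by decide⟩
  | succ n hn ih =>
    obtain ⟨m, hm, h1, h2⟩ := ih
    rcases lt_or_ge (n+1) (g (m+1)) with h | h
    · exact ⟨m, hm, by omega, h⟩
    · have e := g_succ (m+1)
      exact ⟨m+1, by omega, by omega, by omega⟩


set_option maxHeartbeats 2000000 in
lemma B_block (B : ℕ → ℕ) (hB : IsBSeq B) :
    ∀ n m, 1 ≤ m → g m ≤ n → n < g (m+1) → B n = m := by
  intro n
  induction n using Nat.strong_induction_on with
  | _ n ih =>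
    intro m hm h1 h2
    have IH : ∀ k v, k < n → 1 ≤ v → g v ≤ k → k < g v + 1 + Wt v → B k = v := by
      intro k v hk hv hl hu
      exact ih k hk v hv hl (by rw [g_succ v]; exact hu)
    have hr : ∀ u < 7, R u = 0 := by decide
    have hgself : m ≤ g m := Nat.le_add_right _ _
    rcases Nat.lt_or_ge n 6 with hn6 | hn6
    · have hm5 : m ≤ 5 := by omega
      have e1 : g m = m := by have := hr m (by omega); show m + R m = m; omega
      have e2 : g (m+1) = m+1 := by
        have := hr (m+1) (by omega); show (m+1) + R (m+1) = m+1; omega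
      have hnm : n = m := by omega
      rw [hnm]
      exact hB.2.1 m (by omega) (by omega)
    · have hm6 : 6 ≤ m := by
        by_contra hc
        have e2 : g (m+1) = m+1 := by
          have := hr (m+1) (by omega); show (m+1) + R (m+1) = m+1; omega
        omega
      have hrec := hB.2.2 n hn6
      rcases (show m % 3 = 0 ∨ m % 3 = 1 ∨ m % 3 = 2 by omega) with hmod|hmod|hmod
      · -- m = 3t
        obtain ⟨t, rfl⟩ : ∃ t, m = 3*t := ⟨m/3, by omega⟩
        have ht : 2 ≤ t := by omega
        have F1 : g (3*t+1) = g (3*t) + 1 + Wt (3*t) := g_succ (3*t)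
        have F2 : g (3*t) = g (3*t-1) + 1 + Wt (3*t-1) := by
          have h := g_succ (3*t-1); rw [show 3*t-1+1 = 3*t by omega] at h; exact h
        have F3 : g (3*t-1) = g (3*t-2) + 1 + Wt (3*t-2) := by
          have h := g_succ (3*t-2); rw [show 3*t-2+1 = 3*t-1 by omega] at h; exact h
        have F3b : g (3*t-2) = g (3*t-3) + 1 + Wt (3*t-3) := by
          have h := g_succ (3*t-3); rw [show 3*t-3+1 = 3*t-2 by omega] at h; exact h
        have W0 : Wt (3*t) = 1 := W_mod0 _ (by omega) (by omega)
        have W1 : Wt (3*t-1) = Wt t := by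
          have h := W_mod2 (t-1)
          rw [show 3*(t-1)+2 = 3*t-1 by omega, show t-1+1 = t by omega] at h; exact h
        have W2 : Wt (3*t-2) = 0 := W_mod1 _ (by omega)
        have Wc : Wt (3*t-3) ≤ 1 := Wt_le_one _
        have F4 : g (t+1) = g t + 1 + Wt t := g_succ t
        have F5 : g t = g (t-1) + 1 + Wt (t-1) := by
          have h := g_succ (t-1); rw [show t-1+1 = t by omega] at h; exact h
        have F6 : R (3*t) + 2 = t + R t + Wt t := Rscale t ht
        have F7 : g (3*t) = 3*t + R (3*t) := rfl
        have F8 : g t = t + R t := rfl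
        have Wa : Wt t ≤ 1 := Wt_le_one t
        have Wb : Wt (t-1) ≤ 1 := Wt_le_one (t-1)
        have Wd : Wt (t+1) ≤ 1 := Wt_le_one (t+1)
        rcases (show Wt t = 0 ∨ Wt t = 1 by omega) with hw | hw <;>
          rcases (show n = g (3*t) ∨ n = g (3*t)+1 by omega) with hn | hn
        · have b1 : B (n-1) = 3*t-1 := IH (n-1) (3*t-1) (by omega) (by omega) (by omega) (by omega)
          have b2 : B (n-2) = 3*t-2 := IH (n-2) (3*t-2) (by omega) (by omega) (by omega) (by omega)
          have b3 : B (n-3) = 3*t-3 := IH (n-3) (3*t-3) (by omega) (by omega) (by omega) (by omega)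
          rw [b1, b2, b3, show n - (3*t-1) = R (3*t) + 1 by omega,
             show n - (3*t-2) = R (3*t) + 2 by omega,
             show n - (3*t-3) = R (3*t) + 3 by omega] at hrec
          have c1 : B (R (3*t)+1) = t-1 := IH _ (t-1) (by omega) (by omega) (by omega) (by omega)
          have c2 : B (R (3*t)+2) = t := IH _ t (by omega) (by omega) (by omega) (by omega)
          have c3 : B (R (3*t)+3) = t+1 := IH _ (t+1) (by omega) (by omega) (by omega) (by omega)
          rw [c1, c2, c3] at hrec
          omega
        · have b1 : B (n-1) = 3*t := IH (n-1) (3*t) (by omega) (by omega) (by omega) (by omega)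
          have b2 : B (n-2) = 3*t-1 := IH (n-2) (3*t-1) (by omega) (by omega) (by omega) (by omega)
          have b3 : B (n-3) = 3*t-2 := IH (n-3) (3*t-2) (by omega) (by omega) (by omega) (by omega)
          rw [b1, b2, b3, show n - (3*t) = R (3*t) + 1 by omega,
             show n - (3*t-1) = R (3*t) + 2 by omega,
             show n - (3*t-2) = R (3*t) + 3 by omega] at hrec
          have c1 : B (R (3*t)+1) = t-1 := IH _ (t-1) (by omega) (by omega) (by omega) (by omega)
          have c2 : B (R (3*t)+2) = t := IH _ t (by omega) (by omega) (by omega) (by omega)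
          have c3 : B (R (3*t)+3) = t+1 := IH _ (t+1) (by omega) (by omega) (by omega) (by omega)
          rw [c1, c2, c3] at hrec
          omega
        · have b1 : B (n-1) = 3*t-1 := IH (n-1) (3*t-1) (by omega) (by omega) (by omega) (by omega)
          have b2 : B (n-2) = 3*t-1 := IH (n-2) (3*t-1) (by omega) (by omega) (by omega) (by omega)
          have b3 : B (n-3) = 3*t-2 := IH (n-3) (3*t-2) (by omega) (by omega) (by omega) (by omega)
          rw [b1, b2, b3, show n - (3*t-1) = R (3*t) + 1 by omega,
             show n - (3*t-2) = R (3*t) + 2 by omega] at hrec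
          have c1 : B (R (3*t)+1) = t := IH _ t (by omega) (by omega) (by omega) (by omega)
          have c2 : B (R (3*t)+2) = t := IH _ t (by omega) (by omega) (by omega) (by omega)
          rw [c1, c2] at hrec
          omega
        · have b1 : B (n-1) = 3*t := IH (n-1) (3*t) (by omega) (by omega) (by omega) (by omega)
          have b2 : B (n-2) = 3*t-1 := IH (n-2) (3*t-1) (by omega) (by omega) (by omega) (by omega)
          have b3 : B (n-3) = 3*t-1 := IH (n-3) (3*t-1) (by omega) (by omega) (by omega) (by omega)
          rw [b1, b2, b3, show n - (3*t) = R (3*t) + 1 by omega,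
             show n - (3*t-1) = R (3*t) + 2 by omega] at hrec
          have c1 : B (R (3*t)+1) = t := IH _ t (by omega) (by omega) (by omega) (by omega)
          have c2 : B (R (3*t)+2) = t := IH _ t (by omega) (by omega) (by omega) (by omega)
          rw [c1, c2] at hrec
          omega
      · -- m = 3t+1
        obtain ⟨t, rfl⟩ : ∃ t, m = 3*t+1 := ⟨m/3, by omega⟩
        have ht : 2 ≤ t := by omega
        have F0 : g (3*t+1+1) = g (3*t+1) + 1 + Wt (3*t+1) := g_succ (3*t+1)
        have Wm : Wt (3*t+1) = 0 := W_mod1 _ (by omega)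
        have F1 : g (3*t+1) = g (3*t) + 1 + Wt (3*t) := g_succ (3*t)
        have W0 : Wt (3*t) = 1 := W_mod0 _ (by omega) (by omega)
        have F2 : g (3*t) = g (3*t-1) + 1 + Wt (3*t-1) := by
          have h := g_succ (3*t-1); rw [show 3*t-1+1 = 3*t by omega] at h; exact h
        have W1 : Wt (3*t-1) = Wt t := by
          have h := W_mod2 (t-1)
          rw [show 3*(t-1)+2 = 3*t-1 by omega, show t-1+1 = t by omega] at h; exact h
        have FR : R (3*t+1) = R (3*t) + Wt (3*t) := R_succ (3*t)
        have F7 : g (3*t+1) = (3*t+1) + R (3*t+1) := rfl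
        have F6 : R (3*t) + 2 = t + R t + Wt t := Rscale t ht
        have F8 : g t = t + R t := rfl
        have F4 : g (t+1) = g t + 1 + Wt t := g_succ t
        have Wa : Wt t ≤ 1 := Wt_le_one t
        have Wd : Wt (t+1) ≤ 1 := Wt_le_one (t+1)
        have b1 : B (n-1) = 3*t := IH (n-1) (3*t) (by omega) (by omega) (by omega) (by omega)
        have b2 : B (n-2) = 3*t := IH (n-2) (3*t) (by omega) (by omega) (by omega) (by omega)
        have b3 : B (n-3) = 3*t-1 := IH (n-3) (3*t-1) (by omega) (by omega) (by omega) (by omega)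
        rw [b1, b2, b3, show n - (3*t) = R (3*t) + 2 by omega,
           show n - (3*t-1) = R (3*t) + 3 by omega] at hrec
        have c2 : B (R (3*t)+2) = t := IH _ t (by omega) (by omega) (by omega) (by omega)
        have c3 : B (R (3*t)+3) = t+1 := IH _ (t+1) (by omega) (by omega) (by omega) (by omega)
        rw [c2, c3] at hrec
        omega
      · -- m = 3t+2
        obtain ⟨t, rfl⟩ : ∃ t, m = 3*t+2 := ⟨m/3, by omega⟩
        have ht : 2 ≤ t := by omega
        have F0 : g (3*t+2+1) = g (3*t+2) + 1 + Wt (3*t+2) := g_succ (3*t+2)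
        have Wm : Wt (3*t+2) = Wt (t+1) := W_mod2 t
        have F2 : g (3*t+2) = g (3*t+1) + 1 + Wt (3*t+1) := g_succ (3*t+1)
        have Wmid : Wt (3*t+1) = 0 := W_mod1 _ (by omega)
        have F1 : g (3*t+1) = g (3*t) + 1 + Wt (3*t) := g_succ (3*t)
        have W0 : Wt (3*t) = 1 := W_mod0 _ (by omega) (by omega)
        have FR1 : R (3*t+1) = R (3*t) + Wt (3*t) := R_succ (3*t)
        have FR2 : R (3*t+2) = R (3*t+1) + Wt (3*t+1) := R_succ (3*t+1)
        have F7 : g (3*t+2) = (3*t+2) + R (3*t+2) := rfl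
        have F6 : R (3*t) + 2 = t + R t + Wt t := Rscale t ht
        have F8 : g t = t + R t := rfl
        have F4 : g (t+1) = g t + 1 + Wt t := g_succ t
        have Wa : Wt t ≤ 1 := Wt_le_one t
        have Wd : Wt (t+1) ≤ 1 := Wt_le_one (t+1)
        rcases (show n = g (3*t+2) ∨ n = g (3*t+2)+1 by omega) with hn | hn
        · have b1 : B (n-1) = 3*t+1 := IH (n-1) (3*t+1) (by omega) (by omega) (by omega) (by omega)
          have b2 : B (n-2) = 3*t := IH (n-2) (3*t) (by omega) (by omega) (by omega) (by omega)
          have b3 : B (n-3) = 3*t := IH (n-3) (3*t) (by omega) (by omega) (by omega) (by omega)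
          rw [b1, b2, b3, show n - (3*t+1) = R (3*t) + 2 by omega,
             show n - (3*t) = R (3*t) + 3 by omega] at hrec
          have c1 : B (R (3*t)+2) = t := IH _ t (by omega) (by omega) (by omega) (by omega)
          have c2 : B (R (3*t)+3) = t+1 := IH _ (t+1) (by omega) (by omega) (by omega) (by omega)
          rw [c1, c2] at hrec
          omega
        · have hw1 : Wt (t+1) = 1 := by omega
          have b1 : B (n-1) = 3*t+2 := IH (n-1) (3*t+2) (by omega) (by omega) (by omega) (by omega)
          have b2 : B (n-2) = 3*t+1 := IH (n-2) (3*t+1) (by omega) (by omega) (by omega) (by omega)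
          have b3 : B (n-3) = 3*t := IH (n-3) (3*t) (by omega) (by omega) (by omega) (by omega)
          rw [b1, b2, b3, show n - (3*t+2) = R (3*t) + 2 by omega,
             show n - (3*t+1) = R (3*t) + 3 by omega,
             show n - (3*t) = R (3*t) + 4 by omega] at hrec
          have c1 : B (R (3*t)+2) = t := IH _ t (by omega) (by omega) (by omega) (by omega)
          have c2 : B (R (3*t)+3) = t+1 := IH _ (t+1) (by omega) (by omega) (by omega) (by omega)
          have c3 : B (R (3*t)+4) = t+1 := IH _ (t+1) (by omega) (by omega) (by omega) (by omega)
          rw [c1, c2, c3] at hrec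
          omega

lemma block_count (B : ℕ → ℕ) (hB : IsBSeq B) (m : ℕ) (hm : 1 ≤ m) :
    {n : ℕ | 1 ≤ n ∧ B n = m} = Set.Ico (g m) (g (m+1)) := by
  ext n
  simp only [Set.mem_setOf_eq, Set.mem_Ico]
  constructor
  · rintro ⟨hn, hBn⟩
    obtain ⟨m', hm', h1, h2⟩ := g_total n hn
    have hb := B_block B hB n m' hm' h1 h2
    rw [hBn] at hb
    subst hb
    exact ⟨h1, h2⟩
  · rintro ⟨h1, h2⟩
    have hgm : m ≤ g m := Nat.le_add_right _ _
    exact ⟨by omega, B_block B hB n m hm h1 h2⟩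

lemma encard_count (B : ℕ → ℕ) (hB : IsBSeq B) (m : ℕ) (hm : 1 ≤ m) :
    {n : ℕ | 1 ≤ n ∧ B n = m}.encard = (1 + Wt m : ℕ) := by
  rw [block_count B hB m hm, ← Finset.coe_Ico, Set.encard_coe_eq_coe_finsetCard,
    Nat.card_Ico]
  congr 1
  have := g_succ m
  omega


/-- no positive `m ≡ 1 (mod 3)` has a witness pair; every multiple of 3 with
`m ≥ 6` has the witness pair `(m/3 − 1, 1)`; consequently every positive `m ≡ 1 (mod 3)`
appears exactly once in the B-sequence, and every multiple of 3 with `m ≥ 6` exactly twice. -/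
theorem stmt_10 (B : ℕ → ℕ) (hB : IsBSeq B) :
    (∀ m : ℕ, 1 ≤ m → m % 3 = 1 →
      ¬(∃ k i : ℕ, 1 ≤ k ∧ 1 ≤ i ∧ m = k * 3 ^ i + a i)) ∧
    (∀ m : ℕ, 6 ≤ m → 3 ∣ m → 1 ≤ m / 3 - 1 ∧ m = (m / 3 - 1) * 3 ^ 1 + a 1) ∧
    (∀ m : ℕ, 1 ≤ m → m % 3 = 1 → {n : ℕ | 1 ≤ n ∧ B n = m}.encard = 1) ∧
    (∀ m : ℕ, 6 ≤ m → 3 ∣ m → {n : ℕ | 1 ≤ n ∧ B n = m}.encard = 2) := by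
  refine ⟨?_, ?_, ?_, ?_⟩
  · rintro m hm h1 ⟨k, i, hk, hi, he⟩
    rcases Nat.lt_or_ge i 2 with h | h
    · have hi1 : i = 1 := by omega
      rw [hi1, pow_one, show a 1 = 3 from rfl] at he
      omega
    · have h2 : a i % 3 = 2 := a_mod3 i h
      obtain ⟨c, hc⟩ : (3:ℕ) ∣ k * 3 ^ i := Dvd.dvd.mul_left (dvd_pow_self 3 (by omega)) k
      rw [hc] at he
      omega
  · intro m h6 h3
    rw [pow_one, show a 1 = 3 from rfl]
    omega
  · intro m hm h1
    rw [encard_count B hB m hm, W_mod1 m h1]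
    rfl
  · intro m h6 h3
    rw [encard_count B hB m (by omega), W_mod0 m (by omega) h6]
    rfl
end

section
/- Let k ≥ 4 be an integer and set N = (k² + k)/2. Suppose B : ℕ → ℕ satisfies B(0) = 0, B(i) = i for 1 ≤ i ≤ N − 1, and B(n) = ∑_{i=1}^k B(n − B(n−i)) for all n with N ≤ n ≤ (k³ + k²)/2 + 2k + 1. Then B((k³ + k²)/2 + 2k + 1) = B((k³ + k²)/2 + 2k) + 2; in particular, B is not slow. -/
/-!
Write `N = 1 + ⋯ + k`. Up to `n = k N + k` the solution is
`B n = n - ⌊(n + k - N) / (k + 1)⌋`: by induction, each argument `n - B (n - i)` of the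
recurrence is `i + ⌊(n - i + k - N) / (k + 1)⌋`, which lies in `[1, N]` where `B` is the
identity, and Hermite's identity adds up the floors. On `k N + 1, …, k N + 2k + 1` the defect
`n - B n` exceeds `N - k` by `1` (`k` times), `2` (`k - 1` times), `3`, `2`: the arguments now
reach `N + 1` and `N + 2`, where `B` lags by one, and counting those lags reproduces the pattern.
The drop of the defect from `3` to `2` is the jump of `B` by `2`.
-/

open Finset

theorem Nat.sum_range_add_div (K t : ℕ) (hK : 0 < K) : ∑ r ∈ range K, (t + r) / K = t := by
  induction t with
  | zero => exact sum_eq_zero fun r hr => Nat.div_eq_of_lt (by simpa using mem_range.mp hr)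
  | succ t ih =>
    obtain ⟨K, rfl⟩ : ∃ K', K = K' + 1 := ⟨K - 1, by omega⟩
    have hshift := sum_range_succ' (fun r => (t + r) / (K + 1)) (K + 1)
    rw [sum_range_succ _ (K + 1), ih, Nat.add_div_right t hK] at hshift
    simp only [Nat.add_zero] at hshift
    have : t / (K + 1) ≤ t := Nat.div_le_self _ _
    simp only [show ∀ r, t + 1 + r = t + (r + 1) from fun r => by omega]
    omega

theorem Nat.sum_Icc_sub_div_add_div (t k : ℕ) :
    ∑ i ∈ Icc 1 k, (t + k - i) / (k + 1) + (t + k) / (k + 1) = t := by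
  have h := Nat.sum_range_add_div (k + 1) t k.succ_pos
  rw [← sum_range_reflect, sum_range_succ', Nat.add_sub_cancel, Nat.sub_zero] at h
  rw [← Ico_add_one_right_eq_Icc, sum_Ico_eq_sum_range, Nat.add_sub_cancel]
  refine Eq.trans ?_ h
  congr 1
  exact sum_congr rfl fun i hi => by have := mem_range.mp hi; congr 1; omega

theorem Nat.sum_Icc_id_mul_two (m : ℕ) : (∑ i ∈ Icc 1 m, i) * 2 = m * (m + 1) := by
  induction m with
  | zero => simp
  | succ m ih => rw [sum_Icc_succ_top (by omega), Nat.add_mul, ih]; ring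

theorem Nat.sum_Icc_ite_le {k s : ℕ} (hs : s ≤ k) :
    ∑ i ∈ Icc 1 k, (if i ≤ s then 1 else 0) = s := by
  rw [sum_boole, Nat.cast_id, show {i ∈ Icc 1 k | i ≤ s} = Icc 1 s by ext; simp; omega]
  simp

def tailDefect (k j : ℕ) : ℕ := if j ≤ k then 1 else if j = 2 * k then 3 else 2

theorem add_tailDefect_sub_le {k i j : ℕ} (hk : 2 ≤ k) (hi : i ≤ k) (hj : j ≤ 2 * k + 1) :
    i + tailDefect k (j - i) ≤ k + 2 := by
  unfold tailDefect
  split_ifs <;> omega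

theorem tailDefect_add_sum {k j : ℕ} (hk : 4 ≤ k) (hj : k < j) (hj' : j ≤ 2 * k + 1) :
    tailDefect k j + ∑ i ∈ Icc 1 k, tailDefect k (j - i)
      = j + ∑ i ∈ Icc 1 k, (if k < i + tailDefect k (j - i) then 1 else 0) := by
  have hT : ∀ i ∈ Icc 1 k, tailDefect k (j - i)
      = 1 + (if i ≤ j - k - 1 then 1 else 0) + (if i = j - 2 * k then 1 else 0) := by
    intro i hi
    have := mem_Icc.mp hi
    unfold tailDefect
    split_ifs <;> omega
  have hcount : ∀ i ∈ Icc 1 k, (if k < i + tailDefect k (j - i) then 1 else 0)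
      = (if i = k then 1 else 0) + (if i = k - 1 then (if 2 * k ≤ j then 1 else 0) else 0) := by
    -- `4 ≤ k`: at `j = 2 * k + 1` the summand `i = 1`, with `tailDefect = 3`, does not exceed `k`
    intro i hi
    have := mem_Icc.mp hi
    rw [hT i hi]
    split_ifs <;> omega
  rw [sum_congr rfl hT, sum_congr rfl hcount, sum_add_distrib, sum_add_distrib, sum_add_distrib,
    Nat.sum_Icc_ite_le (by omega), sum_ite_eq', sum_ite_eq', sum_ite_eq']
  simp only [tailDefect, sum_const, Nat.card_Icc, mem_Icc, smul_eq_mul]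
  split_ifs <;> omega

def SatisfiesRecOn (k : ℕ) (B : ℕ → ℕ) (lo hi : ℕ) : Prop :=
  ∀ n, lo ≤ n → n ≤ hi → B n = ∑ i ∈ Icc 1 k, B (n - B (n - i))

theorem SatisfiesRecOn.mono {k lo hi lo' hi' : ℕ} {B : ℕ → ℕ} (h : SatisfiesRecOn k B lo hi)
    (hlo : lo ≤ lo') (hhi : hi' ≤ hi) : SatisfiesRecOn k B lo' hi' :=
  fun n h₁ h₂ => h n (hlo.trans h₁) (h₂.trans hhi)

section
variable {k N : ℕ} {B : ℕ → ℕ}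

theorem apply_eq_self_of_le (hN : ∑ i ∈ Icc 1 k, i = N) (hkN : k < N) (hlt : ∀ a < N, B a = a)
    (hrec : SatisfiesRecOn k B N N) (a : ℕ) (ha : a ≤ N) : B a = a := by
  rcases ha.lt_or_eq with ha | rfl
  · exact hlt a ha
  calc B a = ∑ i ∈ Icc 1 k, i := (hrec a le_rfl le_rfl).trans <| sum_congr rfl fun i hi => by
        obtain ⟨hi₁, hik⟩ := mem_Icc.mp hi
        rw [hlt (a - i) (by omega), Nat.sub_sub_self (by omega), hlt i (by omega)]
    _ = a := hN

theorem two_mul_eq_of_sum_Icc_id (hN : ∑ i ∈ Icc 1 k, i = N) : 2 * N = k * (k + 1) := by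
  have := Nat.sum_Icc_id_mul_two k
  omega

theorem le_of_two_mul_eq (hN : 2 * N = k * (k + 1)) : k ≤ N := by
  nlinarith [Nat.le_mul_self k]

theorem add_div_le_of_le_mul_add (hN : 2 * N = k * (k + 1)) {i m : ℕ} (hi : i ≤ k)
    (hm : m ≤ k * N + k) : i + (m - i + k - N) / (k + 1) ≤ N := by
  have hkN := le_of_two_mul_eq hN
  obtain ⟨j, rfl⟩ : ∃ j, N = i + j := ⟨N - i, by omega⟩
  have hlt : m + k < (j + 1) * (k + 1) + 2 * i + j := by
    nlinarith [Nat.mul_le_mul_right k hi]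
  have : k + 1 ≤ (j + 1) * (k + 1) := Nat.le_mul_of_pos_left _ j.succ_pos
  have : (m - i + k - (i + j)) / (k + 1) < j + 1 :=
    (Nat.div_lt_iff_lt_mul (by omega : 0 < k + 1)).mpr (by omega)
  omega

theorem apply_add_div_eq_self (hN : ∑ i ∈ Icc 1 k, i = N)
    (hrec : SatisfiesRecOn k B N (k * N + k)) (hle : ∀ a ≤ N, B a = a) :
    ∀ m ≤ k * N + k, B m + (m + k - N) / (k + 1) = m := by
  have hN2 := two_mul_eq_of_sum_Icc_id hN
  have hkN := le_of_two_mul_eq hN2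
  intro m
  induction m using Nat.strong_induction_on with
  | _ m ih =>
  intro hm
  rcases le_or_gt m N with hmN | hmN
  · rw [hle m hmN, Nat.div_eq_of_lt (by omega), Nat.add_zero]
  have hterm : ∀ i ∈ Icc 1 k, B (m - B (m - i)) = i + (m - N + k - i) / (k + 1) := by
    intro i hi
    obtain ⟨hi₁, hik⟩ := mem_Icc.mp hi
    have hprev := ih (m - i) (by omega) (by omega)
    have hbound := add_div_le_of_le_mul_add hN2 hik hm
    rw [show m - N + k - i = m - i + k - N by omega]
    have harg : m - B (m - i) = i + (m - i + k - N) / (k + 1) := by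
      generalize (m - i + k - N) / (k + 1) = q at hprev ⊢
      omega
    rw [harg, hle _ hbound]
  have hHermite := Nat.sum_Icc_sub_div_add_div (m - N) k
  rw [hrec m hmN.le hm, sum_congr rfl hterm, sum_add_distrib, hN,
    show m + k - N = m - N + k by omega]
  omega

theorem mul_eq_succ_mul_sub_add (hN : 2 * N = k * (k + 1)) : k * N = (k + 1) * (N - k) + N := by
  obtain ⟨D, rfl⟩ := Nat.exists_eq_add_of_le (le_of_two_mul_eq hN)
  rw [Nat.add_sub_cancel_left]
  nlinarith

theorem apply_add_ite_eq (hk : 2 ≤ k) (hA : ∀ m ≤ k * N + k, B m + (m + k - N) / (k + 1) = m)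
    (x : ℕ) (hx : x ≤ N + 2) : B x + (if N < x then 1 else 0) = x := by
  have h := hA x (by nlinarith)
  split_ifs with hxN
  · rwa [Nat.div_eq_of_lt_le (k := 1) (by omega) (by omega)] at h
  · rwa [Nat.div_eq_of_lt (by omega)] at h

theorem apply_add_sum_ite_eq {D n : ℕ} (e : ℕ → ℕ)
    (hsmall : ∀ x ≤ N + 2, B x + (if N < x then 1 else 0) = x) (hD : N = D + k)
    (hn : B n = ∑ i ∈ Icc 1 k, B (n - B (n - i))) (hkn : k ≤ n)
    (he : ∀ i ∈ Icc 1 k, B (n - i) + D + e i = n - i)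
    (hek : ∀ i ∈ Icc 1 k, i + e i ≤ k + 2) :
    B n + ∑ i ∈ Icc 1 k, (if k < i + e i then 1 else 0) = ∑ i ∈ Icc 1 k, (D + i + e i) := by
  rw [hn, ← sum_add_distrib]
  refine sum_congr rfl fun i hi => ?_
  have harg : n - B (n - i) = D + i + e i := by have := he i hi; have := mem_Icc.mp hi; omega
  have h := hsmall (D + i + e i) (by have := hek i hi; omega)
  simp only [show N < D + i + e i ↔ k < i + e i by omega] at h
  rwa [harg]

theorem apply_mul_add_add_tailDefect (hk : 4 ≤ k) (hN : ∑ i ∈ Icc 1 k, i = N)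
    (hrec : SatisfiesRecOn k B N (k * N + 2 * k + 1))
    (hA : ∀ m ≤ k * N + k, B m + (m + k - N) / (k + 1) = m) (j : ℕ) (hj : 1 ≤ j)
    (hj' : j ≤ 2 * k + 1) : B (k * N + j) + (N - k) + tailDefect k j = k * N + j := by
  have hN2 := two_mul_eq_of_sum_Icc_id hN
  have hkN := mul_eq_succ_mul_sub_add hN2
  have hsmall := apply_add_ite_eq (by omega) hA
  have hNk : k + 2 ≤ N := by nlinarith
  induction j using Nat.strong_induction_on with
  | _ j ih =>
  rcases le_or_gt j k with hjk | hjk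
  · have h := hA (k * N + j) (by omega)
    rw [show k * N + j + k - N = j + k + (N - k) * (k + 1) by rw [hkN, Nat.mul_comm]; omega,
      Nat.add_mul_div_right _ _ (by omega), Nat.div_eq_of_lt_le (k := 1) (by omega) (by omega)] at h
    rw [tailDefect, if_pos hjk]
    omega
  have hstep := apply_add_sum_ite_eq (D := N - k) (n := k * N + j) (fun i => tailDefect k (j - i))
    hsmall (by omega) (hrec _ (by omega) (by omega)) (by omega)
    (fun i hi => by
      have := mem_Icc.mp hi
      rw [show k * N + j - i = k * N + (j - i) by omega]
      exact ih (j - i) (by omega) (by omega) (by omega))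
    (fun i hi => add_tailDefect_sub_le (by omega) (mem_Icc.mp hi).2 hj')
  rw [sum_add_distrib, sum_add_distrib, sum_const, Nat.card_Icc, Nat.add_sub_cancel, hN,
    smul_eq_mul] at hstep
  have := tailDefect_add_sum hk hjk hj'
  have : (k + 1) * (N - k) = k * (N - k) + (N - k) := Nat.succ_mul k (N - k)
  omega

end

/-- with `k ≥ 4`, `N = (k²+k)/2`, and `B` satisfying the initial condition and
the `B_k`-recurrence for `N ≤ n ≤ (k³+k²)/2 + 2k + 1`:
`B ((k³+k²)/2 + 2k + 1) = B ((k³+k²)/2 + 2k) + 2`; in particular `B` is not slow. -/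
theorem stmt_16 (k N : ℕ) (hk : 4 ≤ k) (hN : N = (k ^ 2 + k) / 2) (B : ℕ → ℕ)
    (hB0 : B 0 = 0)
    (hinit : ∀ i, 1 ≤ i → i ≤ N - 1 → B i = i)
    (hrec : ∀ n, N ≤ n → n ≤ (k ^ 3 + k ^ 2) / 2 + 2 * k + 1 →
      B n = ∑ i ∈ Finset.Icc 1 k, B (n - B (n - i))) :
    B ((k ^ 3 + k ^ 2) / 2 + 2 * k + 1) = B ((k ^ 3 + k ^ 2) / 2 + 2 * k) + 2 ∧
    ¬(∀ n : ℕ, (B (n + 1) : ℤ) - B n ∈ ({0, 1} : Set ℤ)) := by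
  have hsum : ∑ i ∈ Icc 1 k, i = N := by
    have := Nat.sum_Icc_id_mul_two k
    rw [hN, show k ^ 2 + k = k * (k + 1) by ring, ← this, Nat.mul_div_cancel _ two_pos]
  have hN2 := two_mul_eq_of_sum_Icc_id hsum
  have hcube : (k ^ 3 + k ^ 2) / 2 = k * N := by
    rw [show k ^ 3 + k ^ 2 = k * N * 2 by rw [mul_assoc, mul_comm N, hN2]; ring,
      Nat.mul_div_cancel _ two_pos]
  rw [hcube] at hrec ⊢
  have hrec' : SatisfiesRecOn k B N (k * N + 2 * k + 1) := hrec
  have hle := apply_eq_self_of_le hsum (by nlinarith) (fun a ha => by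
    rcases Nat.eq_zero_or_pos a with rfl | ha₀
    exacts [hB0, hinit a ha₀ (by omega)]) (hrec'.mono le_rfl (by nlinarith))
  have hA := apply_add_div_eq_self hsum (hrec'.mono le_rfl (by omega)) hle
  have h₁ := apply_mul_add_add_tailDefect hk hsum hrec' hA (2 * k) (by omega) (by omega)
  have h₂ := apply_mul_add_add_tailDefect hk hsum hrec' hA (2 * k + 1) (by omega) (by omega)
  rw [tailDefect, if_neg (by omega), if_pos rfl] at h₁
  rw [tailDefect, if_neg (by omega), if_neg (by omega), ← Nat.add_assoc] at h₂
  refine ⟨by omega, fun hslow => ?_⟩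
  have := hslow (k * N + 2 * k)
  simp only [Set.mem_insert_iff, Set.mem_singleton_iff] at this
  omega
end
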